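/- Let Q = [[0, -ζ², -1], [-ζ², 0, -ζ], [0, 0, ζ²]] ∈ M₃(ℂ). Then Q·v₁ is a nonzero scalar multiple of v₁, Q·v₂ is a nonzero scalar multiple of v₄, Q·v₇ is a nonzero scalar multiple of v₃, and Q·v₈ is a nonzero scalar multiple of v₆ (so Q realizes the unique projective transformation sending the frame (v₁,v₂,v₇,v₈) to (v₁,v₄,v₃,v₆)); however, Q·v₃ is not a scalar multiple of any of v₁, …, v₉. In particular Q does not preserve the nine-point configuration, so the coordinate-swap of 𝔽₃² (an element of GL(2,𝔽₃) of determinant −1) is not induced by any element of PGL₃(ℂ) preserving the configuration. -/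

import Mathlib

/-!
Every `v i` has a zero coordinate, whereas `Q *ᵥ v 2 = (ζ², 1 - ζ², -ζ)` has none because `ζ` is
a primitive cube root of unity; the four frame conditions are direct computations using `ζ³ = 1`.
-/

open Matrix

noncomputable def ζ : ℂ := Complex.exp (2 * Real.pi * Complex.I / 3)

/-- The nine column vectors of the rank-one block of the decomposition. -/
noncomputable def v : Fin 9 → (Fin 3 → ℂ) :=
  ![![1, -1, 0],
    ![0, 1, -ζ^2],
    ![1, 0, -ζ^2],
    ![0, 1, -ζ],
    ![1, 0, -1],
    ![1, -ζ^2, 0],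
    ![1, 0, -ζ],
    ![1, -ζ, 0],
    ![0, 1, -1]]

/-- The matrix realizing the unique projective transformation sending the frame
(v₁,v₂,v₇,v₈) to (v₁,v₄,v₃,v₆). -/
noncomputable def Q : Matrix (Fin 3) (Fin 3) ℂ :=
  !![0, -ζ^2, -1; -ζ^2, 0, -ζ; 0, 0, ζ^2]

theorem ne_smul_of_apply_eq_zero {ι R : Type*} [MulZeroClass R] {w u : ι → R} {k : ι}
    (hw : w k ≠ 0) (hu : u k = 0) (c : R) : w ≠ c • u := by
  rintro rfl
  simp [hu] at hw

theorem isPrimitiveRoot_ζ : IsPrimitiveRoot ζ 3 := by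
  simpa [ζ, mul_div_assoc] using Complex.isPrimitiveRoot_exp 3 (by norm_num)

theorem ζ_ne_zero : ζ ≠ 0 := isPrimitiveRoot_ζ.ne_zero (by norm_num)

theorem ζ_pow_three : ζ ^ 3 = 1 := isPrimitiveRoot_ζ.pow_eq_one

theorem exists_v_apply_eq_zero (i : Fin 9) : ∃ k, v i k = 0 := by
  fin_cases i
  exacts [⟨2, rfl⟩, ⟨0, rfl⟩, ⟨1, rfl⟩, ⟨0, rfl⟩, ⟨1, rfl⟩, ⟨2, rfl⟩, ⟨1, rfl⟩, ⟨2, rfl⟩, ⟨0, rfl⟩]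

theorem Q_mulVec_v0 : Q *ᵥ v 0 = ζ ^ 2 • v 0 := by
  ext j; fin_cases j <;> simp [Q, v, mulVec, dotProduct, Fin.sum_univ_three]

theorem Q_mulVec_v1 : Q *ᵥ v 1 = v 3 := by
  ext j; fin_cases j <;> simp [Q, v, mulVec, dotProduct, Fin.sum_univ_three] <;>
    grind [ζ_pow_three]

theorem Q_mulVec_v6 : Q *ᵥ v 6 = ζ • v 2 := by
  ext j; fin_cases j <;> simp [Q, v, mulVec, dotProduct, Fin.sum_univ_three] <;>
    grind [ζ_pow_three]

theorem Q_mulVec_v7 : Q *ᵥ v 7 = v 5 := by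
  ext j; fin_cases j <;> simp [Q, v, mulVec, dotProduct, Fin.sum_univ_three]
  grind [ζ_pow_three]

theorem Q_mulVec_v2 : Q *ᵥ v 2 = ![ζ ^ 2, 1 - ζ ^ 2, -ζ] := by
  ext j; fin_cases j <;> simp [Q, v, mulVec, dotProduct, Fin.sum_univ_three] <;>
    grind [ζ_pow_three]

theorem Q_mulVec_v2_apply_ne_zero (k : Fin 3) : (Q *ᵥ v 2) k ≠ 0 := by
  have hζ2 : ζ ^ 2 ≠ 1 := isPrimitiveRoot_ζ.pow_ne_one_of_pos_of_lt (by norm_num) (by norm_num)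
  rw [Q_mulVec_v2]
  fin_cases k <;> simp [ζ_ne_zero, sub_eq_zero, hζ2.symm]

/-- Q sends v₁,v₂,v₇,v₈ to nonzero multiples of v₁,v₄,v₃,v₆ respectively, but Q·v₃
is not a scalar multiple of any of the nine vectors: the coordinate swap of 𝔽₃² is
not induced by any element of PGL₃(ℂ) preserving the configuration. -/
theorem coordinate_swap_not_induced :
    (∃ c : ℂ, c ≠ 0 ∧ Q.mulVec (v 0) = c • v 0) ∧
    (∃ c : ℂ, c ≠ 0 ∧ Q.mulVec (v 1) = c • v 3) ∧
    (∃ c : ℂ, c ≠ 0 ∧ Q.mulVec (v 6) = c • v 2) ∧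
    (∃ c : ℂ, c ≠ 0 ∧ Q.mulVec (v 7) = c • v 5) ∧
    (∀ (i : Fin 9) (c : ℂ), Q.mulVec (v 2) ≠ c • v i) := by
  refine ⟨⟨ζ ^ 2, pow_ne_zero 2 ζ_ne_zero, Q_mulVec_v0⟩,
    ⟨1, one_ne_zero, by rw [one_smul, Q_mulVec_v1]⟩, ⟨ζ, ζ_ne_zero, Q_mulVec_v6⟩,
    ⟨1, one_ne_zero, by rw [one_smul, Q_mulVec_v7]⟩, fun i c => ?_⟩
  obtain ⟨k, hk⟩ := exists_v_apply_eq_zero i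
  exact ne_smul_of_apply_eq_zero (Q_mulVec_v2_apply_ne_zero k) hk c
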